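/- arXiv:2104.00995 — 3 statements merged into one kernel-verified Lean document; each statement's English description precedes it below -/
import Mathlib

section
/- For all real z, e^{-z} - 1 + z ≥ z²/(2 + |z|). -/
/-! For `z ≤ 0` the claim follows from `exp x ≥ 1 + x + x² / 2` at `x = -z`. For `z ≥ 0`, clearing
the denominator turns it into the Padé-type bound `2 - z ≤ (2 + z) e^{-z}`, which holds because
`(2 + z) e^{-z} + z` vanishes at `0` and has derivative `1 - (1 + z) e^{-z} ≥ 0`. -/

open Real Set

theorem Real.two_sub_le_two_add_mul_exp_neg {x : ℝ} (hx : 0 ≤ x) :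
    2 - x ≤ (2 + x) * exp (-x) := by
  let g : ℝ → ℝ := fun t => (2 + t) * exp (-t) + t
  have hg : ∀ t, HasDerivAt g (1 - (1 + t) * exp (-t)) t := fun t => by
    have := (((hasDerivAt_id' t).const_add 2).mul (hasDerivAt_neg t).exp).add (hasDerivAt_id' t)
    exact this.congr_deriv (by ring)
  have hmono : MonotoneOn g (Ici 0) := by
    refine monotoneOn_of_deriv_nonneg (convex_Ici 0) (fun t _ => (hg t).continuousAt.continuousWithinAt)
      (fun t _ => (hg t).differentiableAt.differentiableWithinAt) fun t _ => ?_
    rw [(hg t).deriv, sub_nonneg, ← le_div_iff₀ (exp_pos _), exp_neg, div_inv_eq_mul, one_mul]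
    linarith [add_one_le_exp t]
  have := hmono self_mem_Ici hx hx
  simp only [g, add_zero, neg_zero, exp_zero, mul_one] at this
  linarith

theorem exp_taylor_residual_lower_bound (z : ℝ) :
    Real.exp (-z) - 1 + z ≥ z ^ 2 / (2 + |z|) := by
  rcases le_total 0 z with hz | hz
  · rw [abs_of_nonneg hz, ge_iff_le, div_le_iff₀ (by linarith)]
    linarith [two_sub_le_two_add_mul_exp_neg hz]
  · have htaylor := quadratic_le_exp_of_nonneg (neg_nonneg.mpr hz)
    calc z ^ 2 / (2 + |z|) ≤ z ^ 2 / 2 :=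
          div_le_div_of_nonneg_left (sq_nonneg z) two_pos (by linarith [abs_nonneg z])
      _ ≤ exp (-z) - 1 + z := by nlinarith
end

section
/- For all real x and z, -ln(1 + tanh(x+z)) + ln(1 + tanh(x)) + z(1 - tanh(x)) ≥ (z²/(2(1+|z|))) · sech²(x). -/
/-! Since `1 + tanh t = exp t / cosh t`, the left-hand side is the first-order Taylor residual
`log (cosh (x + z)) - log (cosh x) - z * tanh x` of `log ∘ cosh`, whose derivative is `tanh`.
The residual is invariant under `(x, z) ↦ (-x, -z)`, so we may take `z ≥ 0` and compare
derivatives in `z`: as `cosh (x + t) ≤ cosh x * exp t`,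
`tanh (x + t) - tanh x = sinh t / (cosh (x + t) * cosh x) ≥ (1 - exp (-t) ^ 2) / 2 * sech x ^ 2`,
and `exp (-t) ≤ (1 + t)⁻¹` bounds this below by `(1 - (1 + t)⁻²) / 2 * sech x ^ 2`,
the derivative of the right-hand side. -/

open Real

namespace Real

lemma one_add_tanh_eq_exp_div_cosh (t : ℝ) : 1 + tanh t = exp t / cosh t := by
  rw [tanh_eq_sinh_div_cosh, ← cosh_add_sinh]
  field_simp [(cosh_pos t).ne']

lemma log_one_add_tanh (t : ℝ) : log (1 + tanh t) = t - log (cosh t) := by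
  rw [one_add_tanh_eq_exp_div_cosh, log_div (exp_pos t).ne' (cosh_pos t).ne', log_exp]

lemma hasDerivAt_log_cosh (t : ℝ) : HasDerivAt (fun t => log (cosh t)) (tanh t) t := by
  simpa [tanh_eq_sinh_div_cosh] using (hasDerivAt_cosh t).log (cosh_pos t).ne'

lemma tanh_sub_tanh (x y : ℝ) : tanh x - tanh y = sinh (x - y) / (cosh x * cosh y) := by
  rw [tanh_eq_sinh_div_cosh, tanh_eq_sinh_div_cosh, sinh_sub]
  field_simp [(cosh_pos x).ne', (cosh_pos y).ne']

lemma cosh_add_le_cosh_mul_exp (x : ℝ) {t : ℝ} (ht : 0 ≤ t) :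
    cosh (x + t) ≤ cosh x * exp t := by
  rw [cosh_add, ← cosh_add_sinh t]
  nlinarith [sinh_lt_cosh x, sinh_nonneg_iff.2 ht]

lemma sinh_div_exp (t : ℝ) : sinh t / exp t = (1 - exp (-t) ^ 2) / 2 := by
  rw [sinh_eq, exp_neg]
  field_simp [(exp_pos t).ne']

lemma exp_neg_le_inv_one_add {t : ℝ} (ht : -1 < t) : exp (-t) ≤ (1 + t)⁻¹ := by
  rw [exp_neg]
  exact inv_anti₀ (by linarith) (by linarith [add_one_le_exp t])

lemma one_sub_inv_one_add_sq_div_two_mul_sech_sq_le_tanh_add_sub_tanh (x : ℝ) {t : ℝ}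
    (ht : 0 ≤ t) :
    (1 - ((1 + t) ^ 2)⁻¹) / 2 * (1 / cosh x) ^ 2 ≤ tanh (x + t) - tanh x := by
  have hexp : (1 - ((1 + t) ^ 2)⁻¹) / 2 ≤ sinh t / exp t := by
    rw [sinh_div_exp, ← inv_pow]
    gcongr
    exact exp_neg_le_inv_one_add (by linarith)
  calc (1 - ((1 + t) ^ 2)⁻¹) / 2 * (1 / cosh x) ^ 2
      ≤ sinh t / exp t * (1 / cosh x) ^ 2 := by gcongr
    _ = sinh t / (cosh x * exp t * cosh x) := by field_simp
    _ ≤ sinh t / (cosh (x + t) * cosh x) := by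
      gcongr
      exact cosh_add_le_cosh_mul_exp x ht
    _ = tanh (x + t) - tanh x := by rw [tanh_sub_tanh, add_sub_cancel_left]

lemma hasDerivAt_sq_div_two_mul_one_add {t : ℝ} (ht : 1 + t ≠ 0) :
    HasDerivAt (fun t => t ^ 2 / (2 * (1 + t))) ((1 - ((1 + t) ^ 2)⁻¹) / 2) t := by
  refine ((hasDerivAt_pow 2 t).fun_div (((hasDerivAt_id' t).const_add 1).const_mul 2)
    (mul_ne_zero two_ne_zero ht)).congr_deriv ?_
  field_simp
  ring

lemma sq_div_mul_sech_sq_le_log_cosh_sub (x : ℝ) {z : ℝ} (hz : 0 ≤ z) :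
    z ^ 2 / (2 * (1 + z)) * (1 / cosh x) ^ 2
      ≤ log (cosh (x + z)) - log (cosh x) - z * tanh x := by
  have hf (t : ℝ) (ht : 0 ≤ t) : HasDerivAt (fun t => t ^ 2 / (2 * (1 + t)) * (1 / cosh x) ^ 2)
      ((1 - ((1 + t) ^ 2)⁻¹) / 2 * (1 / cosh x) ^ 2) t :=
    (hasDerivAt_sq_div_two_mul_one_add (by positivity)).mul_const _
  have hB (t : ℝ) : HasDerivAt (fun t => log (cosh (x + t)) - log (cosh x) - t * tanh x)
      (tanh (x + t) - tanh x) t := by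
    have hc : HasDerivAt (fun t => log (cosh (x + t))) (tanh (x + t)) t :=
      (hasDerivAt_log_cosh (x + t)).comp_const_add x t
    simpa using (hc.sub_const (log (cosh x))).fun_sub ((hasDerivAt_id' t).mul_const (tanh x))
  refine image_le_of_deriv_right_le_deriv_boundary (a := 0) (b := z)
    (fun t ht => (hf t ht.1).continuousAt.continuousWithinAt)
    (fun t ht => (hf t ht.1).hasDerivWithinAt) (by simp)
    (fun t _ => (hB t).continuousAt.continuousWithinAt)
    (fun t _ => (hB t).hasDerivWithinAt)
    (fun t ht => one_sub_inv_one_add_sq_div_two_mul_sech_sq_le_tanh_add_sub_tanh x ht.1)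
    ⟨hz, le_rfl⟩

end Real

theorem log_tanh_taylor_residual_lower_bound (x z : ℝ) :
    -Real.log (1 + Real.tanh (x + z)) + Real.log (1 + Real.tanh x)
      + z * (1 - Real.tanh x)
      ≥ (z ^ 2 / (2 * (1 + |z|))) * (1 / Real.cosh x) ^ 2 := by
  have hlog_cosh : -log (1 + tanh (x + z)) + log (1 + tanh x) + z * (1 - tanh x)
      = log (cosh (x + z)) - log (cosh x) - z * tanh x := by
    rw [log_one_add_tanh, log_one_add_tanh]
    ring
  rw [ge_iff_le, hlog_cosh]
  rcases le_total 0 z with hz | hz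
  · rw [abs_of_nonneg hz]
    exact sq_div_mul_sech_sq_le_log_cosh_sub x hz
  · have h := sq_div_mul_sech_sq_le_log_cosh_sub (-x) (neg_nonneg.2 hz)
    rwa [← neg_add, cosh_neg, cosh_neg, tanh_neg, neg_sq, neg_mul_neg, ← abs_of_nonpos hz] at h
end

section
/- Let a_t, b_t ∈ {-1,+1} for t = 1,…,m, let h_t ∈ ℝ with |h_t| ≤ βd, and let Δ ∈ ℝ^k with corresponding linear terms z_t = Σ_k Δ_k a_t b_{t,k} satisfying |z_t| ≤ ‖Δ‖₁. Then (1/m) Σ_t exp(−h_t)·(exp(−z_t) − 1 + z_t) ≥ exp(−βd) · (1/m) Σ_t z_t²/(2 + ‖Δ‖₁). -/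
/-!
The bound holds term by term: `exp (-h t) ≥ exp (-(β * d))`, and
`exp (-z) - 1 + z ≥ z ^ 2 / (2 + |z|)`. For `z ≤ 0` the latter follows from the quadratic Taylor
bound on `exp`; for `z > 0` it is `tanh (z / 2) ≤ z / 2`, proved by monotonicity.
-/

namespace Real

lemma two_sub_le_two_add_mul_exp_neg_s14 {x : ℝ} (hx : 0 ≤ x) : 2 - x ≤ (2 + x) * exp (-x) := by
  set f : ℝ → ℝ := fun y ↦ (2 + y) * exp (-y) - (2 - y)
  have hf' (y : ℝ) : HasDerivAt f (1 - (1 + y) * exp (-y)) y := by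
    have := (((hasDerivAt_id y).const_add 2).mul (hasDerivAt_neg y).exp).sub
      ((hasDerivAt_id y).const_sub 2)
    exact this.congr_deriv (by rw [id]; ring)
  have hf'_nonneg (y : ℝ) : 0 ≤ 1 - (1 + y) * exp (-y) := by
    have : (1 + y) * exp (-y) ≤ exp y * exp (-y) := by
      gcongr
      linarith [add_one_le_exp y]
    rw [← exp_add, add_neg_cancel, exp_zero] at this
    linarith
  have hmono : MonotoneOn f (Set.Ici 0) :=
    monotoneOn_of_hasDerivWithinAt_nonneg (convex_Ici 0)
      (fun y _ ↦ (hf' y).continuousAt.continuousWithinAt)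
      (fun y _ ↦ (hf' y).hasDerivWithinAt) (fun y _ ↦ hf'_nonneg y)
  have := hmono Set.self_mem_Ici hx hx
  simp only [f, neg_zero, exp_zero] at this
  linarith

lemma sq_div_two_add_abs_le_exp_neg_sub_one_add (z : ℝ) :
    z ^ 2 / (2 + |z|) ≤ exp (-z) - 1 + z := by
  rcases le_or_gt z 0 with hz | hz
  · have hquad : 1 + -z + (-z) ^ 2 / 2 ≤ exp (-z) := quadratic_le_exp_of_nonneg (by linarith)
    have : z ^ 2 / (2 + |z|) ≤ z ^ 2 / 2 := by
      gcongr
      linarith [abs_nonneg z]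
    linarith
  · rw [abs_of_pos hz, div_le_iff₀ (by linarith)]
    nlinarith [two_sub_le_two_add_mul_exp_neg_s14 hz.le]

lemma sq_div_two_add_le_exp_neg_sub_one_add {z L : ℝ} (hz : |z| ≤ L) :
    z ^ 2 / (2 + L) ≤ exp (-z) - 1 + z :=
  calc z ^ 2 / (2 + L) ≤ z ^ 2 / (2 + |z|) := by gcongr
    _ ≤ exp (-z) - 1 + z := sq_div_two_add_abs_le_exp_neg_sub_one_add z

end Real

open Finset in
theorem diso_residual_lower_bound_general (m k : ℕ) (β d : ℝ)
    (h : Fin m → ℝ) (Δ : Fin k → ℝ)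
    (z : Fin m → ℝ)
    (hh : ∀ t, |h t| ≤ β * d)
    (hzb : ∀ t, |z t| ≤ ∑ i, |Δ i|) :
    (1 / (m : ℝ)) * ∑ t, Real.exp (-(h t)) * (Real.exp (-(z t)) - 1 + z t)
      ≥ Real.exp (-(β * d)) *
          ((1 / (m : ℝ)) * ∑ t, (z t) ^ 2 / (2 + ∑ i, |Δ i|)) := by
  rw [ge_iff_le, mul_left_comm, mul_sum]
  gcongr with t
  · linarith [le_abs_self (h t), hh t]
  · exact Real.sq_div_two_add_le_exp_neg_sub_one_add (hzb t)

open Finset in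
/-- Deterministic lower bound on the first-order Taylor residual of the
dynamic interaction screening objective. -/
theorem diso_residual_lower_bound (m k : ℕ) (β d : ℝ)
    (a : Fin m → ℝ) (b : Fin m → Fin k → ℝ) (h : Fin m → ℝ) (Δ : Fin k → ℝ)
    (z : Fin m → ℝ)
    (ha : ∀ t, a t = -1 ∨ a t = 1) (hb : ∀ t i, b t i = -1 ∨ b t i = 1)
    (hh : ∀ t, |h t| ≤ β * d)
    (hz : ∀ t, z t = ∑ i, Δ i * a t * b t i)
    (hzb : ∀ t, |z t| ≤ ∑ i, |Δ i|) :
    (1 / (m : ℝ)) * ∑ t, Real.exp (-(h t)) * (Real.exp (-(z t)) - 1 + z t)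
      ≥ Real.exp (-(β * d)) *
          ((1 / (m : ℝ)) * ∑ t, (z t) ^ 2 / (2 + ∑ i, |Δ i|)) :=
  diso_residual_lower_bound_general m k β d h Δ z hh hzb
end
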